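/- arXiv:2312.00181 — 8 statements merged into one kernel-verified Lean document; each statement's English description precedes it below -/
import Mathlib

section
/- Let γ satisfy Hypothesis (Γ). Then there exists a constant C₁ > 0 such that C₁·|s − t| ≤ ‖γ(s) − γ(t)‖ ≤ |s − t| for all s, t ∈ ℝ, where ‖·‖ is the Euclidean norm on ℝ². -/
/-!
The upper bound is the mean value inequality for a unit-speed curve. For the lower bound, pairs
at distance at least `δ` in a compact parameter interval are handled by compactness and
injectivity, and nearby pairs by the continuity of `γ'`, which keeps `γ s - γ t` close to
`(s - t) γ'(t)`. For pairs far apart anywhere on the line, let `u`, `v` be the two asymptotic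
directions and `w = u + v ≠ 0`; then `⟪u, w⟫ = ⟪v, w⟫ = ‖w‖² / 2 =: ρ > 0`, so `⟪γ s, w⟫ - ρ s` is bounded and
`⟪γ s - γ t, w⟫ ≥ ρ |s - t| / 2` as soon as `|s - t|` is large. The remaining pairs are close to
each other and either lie on a common straight end of the curve or in a compact parameter
interval.
-/

open Set

theorem exists_mul_abs_sub_le_dist_of_le_abs_sub {X : Type*} [MetricSpace X] {γ : ℝ → X}
    (hγ : Continuous γ) (hinj : γ.Injective) (a b : ℝ) {δ : ℝ} (hδ : 0 < δ) :
    ∃ c > 0, ∀ s ∈ Icc a b, ∀ t ∈ Icc a b, δ ≤ |s - t| → c * |s - t| ≤ dist (γ s) (γ t) := by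
  set K : Set (ℝ × ℝ) := (Icc a b ×ˢ Icc a b) ∩ {p | δ ≤ |p.1 - p.2|}
  have hK : IsCompact K := (isCompact_Icc.prod isCompact_Icc).inter_right
    (isClosed_le continuous_const (continuous_fst.sub continuous_snd).abs)
  have hpos : ∀ p ∈ K, 0 < |p.1 - p.2| := fun p hp => hδ.trans_le hp.2
  have hcont : ContinuousOn (fun p : ℝ × ℝ => dist (γ p.1) (γ p.2) / |p.1 - p.2|) K :=
    ((hγ.comp continuous_fst).dist (hγ.comp continuous_snd)).continuousOn.div
      (continuous_fst.sub continuous_snd).abs.continuousOn fun p hp => (hpos p hp).ne'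
  obtain ⟨c, hc, hcK⟩ := hK.exists_forall_le' hcont fun p hp =>
    div_pos (dist_pos.2 (hinj.ne (sub_ne_zero.1 (abs_pos.1 (hpos p hp))))) (hpos p hp)
  refine ⟨c, hc, fun s hs t ht hst => ?_⟩
  have := hcK (s, t) ⟨⟨hs, ht⟩, hst⟩
  rwa [le_div_iff₀ (hδ.trans_le hst)] at this

theorem exists_forall_norm_le_of_eq_of_lt_of_gt {G : Type*} [SeminormedAddCommGroup G]
    {g : ℝ → G} (hg : Continuous g) {M : ℝ} {c₁ c₂ : G}
    (h₁ : ∀ s < -M, g s = c₁) (h₂ : ∀ s > M, g s = c₂) : ∃ B, ∀ s, ‖g s‖ ≤ B := by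
  have hrange : range g ⊆ g '' Icc (-M) M ∪ {c₁, c₂} := by
    rintro _ ⟨s, rfl⟩
    rcases lt_or_ge s (-M) with hs | hs
    · exact .inr (.inl (h₁ s hs))
    rcases le_or_gt s M with hs' | hs'
    · exact .inl ⟨s, ⟨hs, hs'⟩, rfl⟩
    · exact .inr (.inr (h₂ s hs'))
  obtain ⟨B, hB⟩ := isBounded_iff_forall_norm_le.1
    (((isCompact_Icc.image hg).isBounded.union (toFinite _).isBounded).subset hrange)
  exact ⟨B, fun s => hB _ ⟨s, rfl⟩⟩

section NormedSpace

variable {F : Type*} [NormedAddCommGroup F] [NormedSpace ℝ F] {γ : ℝ → F}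

theorem mul_sub_le_norm_sub_of_norm_deriv_sub_le (hγ : Differentiable ℝ γ) {t s ε : ℝ}
    (hts : t ≤ s) (hε : ∀ u ∈ Icc t s, ‖deriv γ u - deriv γ t‖ ≤ ε) :
    (‖deriv γ t‖ - ε) * (s - t) ≤ ‖γ s - γ t‖ := by
  set g : ℝ → F := fun u => γ u - u • deriv γ t
  have hg (u : ℝ) : HasDerivAt g (deriv γ u - deriv γ t) u := by
    have := (hγ u).hasDerivAt.sub ((hasDerivAt_id' u).smul_const (deriv γ t))
    rwa [one_smul] at this
  have hgst : ‖g s - g t‖ ≤ ε * (s - t) :=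
    norm_image_sub_le_of_norm_deriv_le_segment' (fun u _ => (hg u).hasDerivWithinAt)
      (fun u hu => hε u (Ico_subset_Icc_self hu)) s (right_mem_Icc.2 hts)
  have hsplit : γ s - γ t = (s - t) • deriv γ t + (g s - g t) := by
    simp only [g, sub_smul]; abel
  calc (‖deriv γ t‖ - ε) * (s - t) ≤ ‖(s - t) • deriv γ t‖ - ‖g s - g t‖ := by
        rw [norm_smul, Real.norm_of_nonneg (sub_nonneg.2 hts)]; nlinarith
    _ ≤ ‖γ s - γ t‖ := by rw [hsplit]; exact norm_sub_le_norm_add _ _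

theorem exists_mul_abs_sub_le_norm_sub_of_mem_Icc (hγ : ContDiff ℝ 1 γ) (hinj : γ.Injective)
    (hunit : ∀ s, ‖deriv γ s‖ = 1) (a b : ℝ) :
    ∃ c > 0, ∀ s ∈ Icc a b, ∀ t ∈ Icc a b, c * |s - t| ≤ ‖γ s - γ t‖ := by
  have hd : Differentiable ℝ γ := hγ.differentiable one_ne_zero
  obtain ⟨δ, hδ, hnear⟩ := Metric.uniformContinuousOn_iff.1
    (isCompact_Icc.uniformContinuousOn_of_continuous (hγ.continuous_deriv le_rfl).continuousOn)
    (1 / 2) one_half_pos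
  obtain ⟨c, hc, hfar⟩ := exists_mul_abs_sub_le_dist_of_le_abs_sub hd.continuous hinj a b hδ
  refine ⟨min (1 / 2) c, by positivity, fun s hs t ht => ?_⟩
  wlog hts : t ≤ s generalizing s t
  · rw [abs_sub_comm, norm_sub_rev]
    exact this t ht s hs (le_of_not_ge hts)
  rcases le_or_gt δ |s - t| with hst | hst
  · calc min (1 / 2) c * |s - t| ≤ c * |s - t| := by gcongr; exact min_le_right _ _
      _ ≤ ‖γ s - γ t‖ := by rw [← dist_eq_norm]; exact hfar s hs t ht hst
  · rw [abs_of_nonneg (sub_nonneg.2 hts)] at hst ⊢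
    have hloc := mul_sub_le_norm_sub_of_norm_deriv_sub_le hd hts (ε := 1 / 2) fun u hu => by
      rw [← dist_eq_norm]
      refine (hnear u ⟨ht.1.trans hu.1, hu.2.trans hs.2⟩ t ht ?_).le
      rw [Real.dist_eq, abs_of_nonneg (sub_nonneg.2 hu.1)]
      linarith [hu.2]
    rw [hunit] at hloc
    calc min (1 / 2) c * (s - t) ≤ (1 - 1 / 2) * (s - t) := by
          gcongr; linarith [min_le_left (1 / 2 : ℝ) c]
      _ ≤ ‖γ s - γ t‖ := hloc

theorem norm_sub_eq_abs_sub_of_eq_smul_add {S : Set ℝ} {v b : F} (hv : ‖v‖ = 1)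
    (h : ∀ s ∈ S, γ s = s • v + b) {s t : ℝ} (hs : s ∈ S) (ht : t ∈ S) :
    ‖γ s - γ t‖ = |s - t| := by
  rw [h s hs, h t ht, add_sub_add_right_eq_sub, ← sub_smul, norm_smul, hv, mul_one,
    Real.norm_eq_abs]

end NormedSpace

section InnerProductSpace

open RealInnerProductSpace

variable {E : Type*} [NormedAddCommGroup E] [InnerProductSpace ℝ E] {γ : ℝ → E} {M : ℝ}
  {u v a b : E}

theorem exists_mul_abs_sub_le_norm_sub_of_le_abs_sub (hγ : Continuous γ)
    (hu : ‖u‖ = 1) (hv : ‖v‖ = 1) (huv : u ≠ -v)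
    (hγ₁ : ∀ s < -M, γ s = s • u + a) (hγ₂ : ∀ s > M, γ s = s • v + b) :
    ∃ c > 0, ∃ D, ∀ s t, D ≤ |s - t| → c * |s - t| ≤ ‖γ s - γ t‖ := by
  set w := u + v
  set ρ := ‖w‖ ^ 2 / 2
  have hw : 0 < ‖w‖ := norm_pos_iff.2 fun h => huv (add_eq_zero_iff_eq_neg.1 h)
  have hρ : 0 < ρ := by positivity
  have hwu : ⟪u, w⟫ = ρ := by
    simp only [ρ, w, inner_add_right, real_inner_self_eq_norm_sq, norm_add_sq_real, hu, hv]; ring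
  have hwv : ⟪v, w⟫ = ρ := by
    simp only [ρ, w, inner_add_right, real_inner_self_eq_norm_sq, norm_add_sq_real, hu, hv,
      real_inner_comm u v]; ring
  obtain ⟨B, hB⟩ := exists_forall_norm_le_of_eq_of_lt_of_gt (M := M)
    (g := fun s => ⟪γ s, w⟫ - ρ * s) (c₁ := ⟪a, w⟫) (c₂ := ⟪b, w⟫)
    ((hγ.inner continuous_const).sub (continuous_const.mul continuous_id))
    (fun s hs => by simp [hγ₁ s hs, inner_add_left, inner_smul_left, hwu]; ring)
    (fun s hs => by simp [hγ₂ s hs, inner_add_left, inner_smul_left, hwv]; ring)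
  refine ⟨‖w‖ / 4, by positivity, 4 * B / ρ, fun s t hst => ?_⟩
  rw [div_le_iff₀ hρ] at hst
  refine le_of_mul_le_mul_right ?_ hw
  have hinner : |⟪γ s - γ t, w⟫| ≤ ‖γ s - γ t‖ * ‖w‖ := abs_real_inner_le_norm _ _
  have hs := hB s
  have ht := hB t
  rw [Real.norm_eq_abs, abs_le] at hs ht
  rw [inner_sub_left, abs_le] at hinner
  rw [show ‖w‖ / 4 * |s - t| * ‖w‖ = ρ * |s - t| / 2 by ring]
  rcases abs_cases (s - t) with ⟨h, _⟩ | ⟨h, _⟩ <;> rw [h] at hst ⊢ <;> linarith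

theorem exists_bilipschitz_of_eq_smul_add (hγ : ContDiff ℝ 1 γ) (hinj : γ.Injective)
    (hunit : ∀ s, ‖deriv γ s‖ = 1) (hu : ‖u‖ = 1) (hv : ‖v‖ = 1) (huv : u ≠ -v)
    (hγ₁ : ∀ s < -M, γ s = s • u + a) (hγ₂ : ∀ s > M, γ s = s • v + b) :
    ∃ C > 0, ∀ s t, C * |s - t| ≤ ‖γ s - γ t‖ ∧ ‖γ s - γ t‖ ≤ |s - t| := by
  have hd : Differentiable ℝ γ := hγ.differentiable one_ne_zero
  obtain ⟨c₁, hc₁, D, hfar⟩ :=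
    exists_mul_abs_sub_le_norm_sub_of_le_abs_sub hd.continuous hu hv huv hγ₁ hγ₂
  obtain ⟨c₂, hc₂, hmid⟩ :=
    exists_mul_abs_sub_le_norm_sub_of_mem_Icc hγ hinj hunit (-M - D) (M + D)
  refine ⟨min c₁ (min c₂ 1), by positivity, fun s t => ⟨?_, ?_⟩⟩
  · rcases le_or_gt D |s - t| with hst | hst
    · exact (mul_le_mul_of_nonneg_right (min_le_left _ _) (abs_nonneg _)).trans (hfar s t hst)
    have hC₂ : min c₁ (min c₂ 1) ≤ c₂ := (min_le_right _ _).trans (min_le_left _ _)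
    have hC₃ : min c₁ (min c₂ 1) * |s - t| ≤ |s - t| :=
      mul_le_of_le_one_left (abs_nonneg _) ((min_le_right _ _).trans (min_le_right _ _))
    rw [abs_lt] at hst
    by_cases hs₂ : M < s ∧ M < t
    · rw [norm_sub_eq_abs_sub_of_eq_smul_add hv hγ₂ hs₂.1 hs₂.2]; exact hC₃
    by_cases hs₁ : s < -M ∧ t < -M
    · rw [norm_sub_eq_abs_sub_of_eq_smul_add hu hγ₁ hs₁.1 hs₁.2]; exact hC₃
    refine (mul_le_mul_of_nonneg_right hC₂ (abs_nonneg _)).trans (hmid s ?_ t ?_) <;>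
      constructor <;> grind
  · simpa using convex_univ.norm_image_sub_le_of_norm_deriv_le (fun x _ => hd x)
      (fun x _ => (hunit x).le) (mem_univ t) (mem_univ s)

end InnerProductSpace

theorem EuclideanSpace.eq_smul_add_of_coord_eq {x : EuclideanSpace ℝ (Fin 2)} {s a b c d : ℝ}
    (h : x 0 = a * s + b ∧ x 1 = c * s + d) : x = s • !₂[a, c] + !₂[b, d] := by
  ext i; fin_cases i <;> simp [h] <;> ring

theorem EuclideanSpace.norm_vec2_eq_one {a c : ℝ} (h : a ^ 2 + c ^ 2 = 1) :
    ‖!₂[a, c]‖ = 1 := by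
  simp [EuclideanSpace.norm_eq, Fin.sum_univ_two, h]

theorem EuclideanSpace.vec2_ne_neg {a c a' c' : ℝ} (h : (a, c) ≠ (-a', -c')) :
    !₂[a, c] ≠ -!₂[a', c'] := by
  intro he
  have h0 := congrArg (· 0) he
  have h1 := congrArg (· 1) he
  simp_all

theorem stmt_0_general (γ : ℝ → EuclideanSpace ℝ (Fin 2))
    (hsmooth : ContDiff ℝ (⊤ : ℕ∞) γ) (hinj : Function.Injective γ)
    (hunit : ∀ s : ℝ, ‖deriv γ s‖ = 1)
    (M am bm cm dm ap bp cp dp : ℝ)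
    (hm1 : am ^ 2 + cm ^ 2 = 1) (hp1 : ap ^ 2 + cp ^ 2 = 1)
    (hne : (am, cm) ≠ (-ap, -cp))
    (hγm : ∀ s : ℝ, s < -M → γ s 0 = am * s + bm ∧ γ s 1 = cm * s + dm)
    (hγp : ∀ s : ℝ, s > M → γ s 0 = ap * s + bp ∧ γ s 1 = cp * s + dp) :
    ∃ C₁ > 0, ∀ s t : ℝ, C₁ * |s - t| ≤ ‖γ s - γ t‖ ∧ ‖γ s - γ t‖ ≤ |s - t| :=
  exists_bilipschitz_of_eq_smul_add (hsmooth.of_le (by exact_mod_cast le_top)) hinj hunit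
    (EuclideanSpace.norm_vec2_eq_one hm1) (EuclideanSpace.norm_vec2_eq_one hp1)
    (EuclideanSpace.vec2_ne_neg hne)
    (fun s hs => EuclideanSpace.eq_smul_add_of_coord_eq (hγm s hs))
    (fun s hs => EuclideanSpace.eq_smul_add_of_coord_eq (hγp s hs))

/-- Let `γ` satisfy Hypothesis (Γ). Then there exists a constant `C₁ > 0`
such that `C₁ * |s - t| ≤ ‖γ s - γ t‖ ≤ |s - t|` for all `s t : ℝ`. -/
theorem stmt_0 (γ : ℝ → EuclideanSpace ℝ (Fin 2))
    (hsmooth : ContDiff ℝ (⊤ : ℕ∞) γ) (hinj : Function.Injective γ)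
    (hunit : ∀ s : ℝ, ‖deriv γ s‖ = 1)
    (M am bm cm dm ap bp cp dp : ℝ) (hM : 0 < M)
    (hm1 : am ^ 2 + cm ^ 2 = 1) (hp1 : ap ^ 2 + cp ^ 2 = 1)
    (hne : (am, cm) ≠ (-ap, -cp))
    (hγm : ∀ s : ℝ, s < -M → γ s 0 = am * s + bm ∧ γ s 1 = cm * s + dm)
    (hγp : ∀ s : ℝ, s > M → γ s 0 = ap * s + bp ∧ γ s 1 = cp * s + dp) :
    ∃ C₁ > 0, ∀ s t : ℝ, C₁ * |s - t| ≤ ‖γ s - γ t‖ ∧ ‖γ s - γ t‖ ≤ |s - t| :=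
  stmt_0_general γ hsmooth hinj hunit M am bm cm dm ap bp cp dp hm1 hp1 hne hγm hγp
end

section
/- Let γ satisfy Hypothesis (Γ). Then for every a ≥ 0, lim_{s→+∞} inf_{t∈[0,a]} ‖γ(s) − γ(t)‖/|s − t| = 1, and likewise lim_{s→−∞} inf_{t∈[−a,0]} ‖γ(s) − γ(t)‖/|s − t| = 1. -/
/-!
Unit speed makes `γ` 1-Lipschitz, so every quotient `‖γ s - γ t‖ / |s - t|` is at most `1`.
Conversely, on the outgoing ray `γ` moves at unit speed in a fixed unit direction `u`, so
`⟪u, γ s - γ t⟫ ≥ (s - t) - C` with `C` uniform over `t` in a bounded set; hence the quotient is at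
least `1 - O(1/s)`. The end at `-∞` is the end at `+∞` of `s ↦ γ (-s)`.
-/

open Filter Bornology
open scoped Topology RealInnerProductSpace

lemma tendsto_add_div_add_atTop (C R : ℝ) :
    Tendsto (fun s : ℝ => (s + C) / (s + R)) atTop (𝓝 1) := by
  have h : Tendsto (fun s : ℝ => 1 + (C - R) / (s + R)) atTop (𝓝 (1 + 0)) :=
    tendsto_const_nhds.add <|
      tendsto_const_nhds.div_atTop (tendsto_atTop_add_const_right _ R tendsto_id)
  rw [add_zero] at h
  refine h.congr' ?_
  filter_upwards [eventually_gt_atTop (-R)] with s hs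
  have : s + R ≠ 0 := by linarith
  field_simp
  ring

lemma EuclideanSpace.inner_vec₂ (x y : ℝ) (v : EuclideanSpace ℝ (Fin 2)) :
    ⟪!₂[x, y], v⟫ = x * v 0 + y * v 1 := by
  simp [PiLp.inner_apply, Fin.sum_univ_two]
  ring

lemma EuclideanSpace.norm_vec₂ (x y : ℝ) : ‖!₂[x, y]‖ = √(x ^ 2 + y ^ 2) := by
  simp [EuclideanSpace.norm_eq, Fin.sum_univ_two]

namespace LipschitzWith

variable {E : Type*} [NormedAddCommGroup E] {γ : ℝ → E}

lemma norm_sub_div_abs_sub_le_one (hγ : LipschitzWith 1 γ) (s t : ℝ) :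
    ‖γ s - γ t‖ / |s - t| ≤ 1 := by
  refine div_le_one_of_le₀ ?_ (abs_nonneg _)
  simpa [dist_eq_norm, Real.dist_eq] using hγ.dist_le_mul s t

lemma iInf_norm_sub_div_abs_sub_le_one (hγ : LipschitzWith 1 γ) {S : Set ℝ} (t₀ : S) (s : ℝ) :
    ⨅ t : S, ‖γ s - γ t‖ / |s - t| ≤ 1 :=
  ciInf_le_of_le ⟨0, by rintro _ ⟨t, rfl⟩; positivity⟩ t₀ (hγ.norm_sub_div_abs_sub_le_one s t₀)

lemma norm_le_norm_add_abs (hγ : LipschitzWith 1 γ) (t : ℝ) : ‖γ t‖ ≤ ‖γ 0‖ + |t| := by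
  have h := hγ.dist_le_mul t 0
  rw [dist_eq_norm, Real.dist_eq, sub_zero, NNReal.coe_one, one_mul] at h
  linarith [norm_le_norm_add_norm_sub' (γ t) (γ 0)]

variable [InnerProductSpace ℝ E]

theorem tendsto_iInf_norm_sub_div_abs_sub_atTop (hγ : LipschitzWith 1 γ) {u : E} (hu : ‖u‖ ≤ 1)
    {K : ℝ} (hK : ∀ᶠ s in atTop, s + K ≤ ⟪u, γ s⟫) {S : Set ℝ} (hS : IsBounded S)
    (hS₀ : S.Nonempty) :
    Tendsto (fun s => ⨅ t : S, ‖γ s - γ t‖ / |s - t|) atTop (𝓝 1) := by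
  obtain ⟨R, hR⟩ := hS.subset_closedBall 0
  have hSR : ∀ t ∈ S, |t| ≤ R := fun t ht => by simpa using hR ht
  set C := K - ‖γ 0‖ - R
  have := hS₀.to_subtype
  refine tendsto_of_tendsto_of_tendsto_of_le_of_le' (tendsto_add_div_add_atTop C R)
    tendsto_const_nhds ?_
    (Eventually.of_forall (hγ.iInf_norm_sub_div_abs_sub_le_one ⟨_, hS₀.some_mem⟩))
  filter_upwards [hK, eventually_gt_atTop R, eventually_ge_atTop (-C)] with s hsK hsR hsC
  refine le_ciInf fun ⟨t, ht⟩ => ?_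
  have htR := abs_le.mp (hSR t ht)
  have hst : 0 < s - t := by linarith
  have hu' (v : E) : ⟪u, v⟫ ≤ ‖v‖ :=
    (real_inner_le_norm u v).trans (mul_le_of_le_one_left (norm_nonneg v) hu)
  have hnum : s + C ≤ ‖γ s - γ t‖ :=
    calc s + C ≤ ⟪u, γ s⟫ - ‖γ t‖ := by linarith [hγ.norm_le_norm_add_abs t, hSR t ht]
      _ ≤ ⟪u, γ s⟫ - ⟪u, γ t⟫ := by gcongr; exact hu' _
      _ ≤ ‖γ s - γ t‖ := by rw [← inner_sub_right]; exact hu' _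
  calc (s + C) / (s + R) ≤ (s + C) / (s - t) :=
        div_le_div_of_nonneg_left (by linarith) hst (by linarith)
    _ ≤ ‖γ s - γ t‖ / |s - t| := by rw [abs_of_pos hst]; gcongr

theorem tendsto_iInf_norm_sub_div_abs_sub_atBot (hγ : LipschitzWith 1 γ) {u : E} (hu : ‖u‖ ≤ 1)
    {K : ℝ} (hK : ∀ᶠ s in atBot, K - s ≤ ⟪u, γ s⟫) {S : Set ℝ} (hS : IsBounded S)
    (hS₀ : S.Nonempty) :
    Tendsto (fun s => ⨅ t : S, ‖γ s - γ t‖ / |s - t|) atBot (𝓝 1) := by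
  have hγneg : LipschitzWith 1 (γ ∘ Neg.neg) := by
    simpa using hγ.comp (isometry_neg (G := ℝ)).lipschitz
  have hKneg : ∀ᶠ s in atTop, s + K ≤ ⟪u, (γ ∘ Neg.neg) s⟫ :=
    (tendsto_neg_atTop_atBot.eventually hK).mono fun s hs => by simpa [add_comm] using hs
  refine ((tendsto_iInf_norm_sub_div_abs_sub_atTop hγneg hu hKneg hS.neg hS₀.neg).comp
    tendsto_neg_atBot_atTop).congr fun s => ?_
  refine ((Equiv.neg ℝ).subtypeEquiv fun t => Set.mem_neg).iInf_congr fun t => ?_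
  show ‖γ s - γ (-t)‖ / |s - -(t : ℝ)| = ‖γ (-(-s)) - γ (-t)‖ / |-s - t|
  rw [neg_neg, ← abs_neg (-s - t)]
  ring_nf

end LipschitzWith

theorem stmt_4_general (γ : ℝ → EuclideanSpace ℝ (Fin 2))
    (hsmooth : ContDiff ℝ (⊤ : ℕ∞) γ)
    (hunit : ∀ s : ℝ, ‖deriv γ s‖ = 1)
    (M am bm cm dm ap bp cp dp : ℝ)
    (hm1 : am ^ 2 + cm ^ 2 = 1) (hp1 : ap ^ 2 + cp ^ 2 = 1)
    (hγm : ∀ s : ℝ, s < -M → γ s 0 = am * s + bm ∧ γ s 1 = cm * s + dm)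
    (hγp : ∀ s : ℝ, s > M → γ s 0 = ap * s + bp ∧ γ s 1 = cp * s + dp)
    (a : ℝ) (ha : 0 ≤ a) :
    Tendsto (fun s : ℝ => ⨅ t : Set.Icc (0 : ℝ) a, ‖γ s - γ (t : ℝ)‖ / |s - (t : ℝ)|)
      atTop (𝓝 1) ∧
    Tendsto (fun s : ℝ => ⨅ t : Set.Icc (-a) (0 : ℝ), ‖γ s - γ (t : ℝ)‖ / |s - (t : ℝ)|)
      atBot (𝓝 1) := by
  have hγ : LipschitzWith 1 γ :=
    lipschitzWith_of_nnnorm_deriv_le (hsmooth.differentiable (by simp)) fun s => by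
      rw [← NNReal.coe_le_coe, coe_nnnorm, hunit s, NNReal.coe_one]
  constructor
  · refine hγ.tendsto_iInf_norm_sub_div_abs_sub_atTop (u := !₂[ap, cp]) (K := ap * bp + cp * dp)
      (by rw [EuclideanSpace.norm_vec₂, hp1, Real.sqrt_one]) ?_ (Metric.isBounded_Icc _ _)
      (Set.nonempty_Icc.mpr ha)
    filter_upwards [eventually_gt_atTop M] with s hs
    rw [EuclideanSpace.inner_vec₂, (hγp s hs).1, (hγp s hs).2]
    linear_combination (-s) * hp1
  · refine hγ.tendsto_iInf_norm_sub_div_abs_sub_atBot (u := !₂[-am, -cm])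
      (K := -(am * bm + cm * dm))
      (by rw [EuclideanSpace.norm_vec₂, neg_sq, neg_sq, hm1, Real.sqrt_one]) ?_
      (Metric.isBounded_Icc _ _) (Set.nonempty_Icc.mpr (neg_nonpos.mpr ha))
    filter_upwards [eventually_lt_atBot (-M)] with s hs
    rw [EuclideanSpace.inner_vec₂, (hγm s hs).1, (hγm s hs).2]
    linear_combination s * hm1

/-- Let `γ` satisfy Hypothesis (Γ). Then for every `a ≥ 0`,
`lim_{s → +∞} inf_{t ∈ [0,a]} ‖γ s - γ t‖ / |s - t| = 1`, and likewise
`lim_{s → -∞} inf_{t ∈ [-a,0]} ‖γ s - γ t‖ / |s - t| = 1`. -/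
theorem stmt_4 (γ : ℝ → EuclideanSpace ℝ (Fin 2))
    (hsmooth : ContDiff ℝ (⊤ : ℕ∞) γ) (hinj : Function.Injective γ)
    (hunit : ∀ s : ℝ, ‖deriv γ s‖ = 1)
    (M am bm cm dm ap bp cp dp : ℝ) (hM : 0 < M)
    (hm1 : am ^ 2 + cm ^ 2 = 1) (hp1 : ap ^ 2 + cp ^ 2 = 1)
    (hne : (am, cm) ≠ (-ap, -cp))
    (hγm : ∀ s : ℝ, s < -M → γ s 0 = am * s + bm ∧ γ s 1 = cm * s + dm)
    (hγp : ∀ s : ℝ, s > M → γ s 0 = ap * s + bp ∧ γ s 1 = cp * s + dp)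
    (a : ℝ) (ha : 0 ≤ a) :
    Tendsto (fun s : ℝ => ⨅ t : Set.Icc (0 : ℝ) a, ‖γ s - γ (t : ℝ)‖ / |s - (t : ℝ)|)
      atTop (𝓝 1) ∧
    Tendsto (fun s : ℝ => ⨅ t : Set.Icc (-a) (0 : ℝ), ‖γ s - γ (t : ℝ)‖ / |s - (t : ℝ)|)
      atBot (𝓝 1) :=
  stmt_4_general γ hsmooth hunit M am bm cm dm ap bp cp dp hm1 hp1 hγm hγp a ha
end

section
/- Let k : ℝ² → ℂ be continuous on ℝ², differentiable at every point (s,t) with s ≠ t, and suppose that both k and its partial derivative ∂k/∂s satisfy the Kernel assumption (B.1) (with common constants R, C, κ, α). Then for all u, φ ∈ C_c^∞(ℝ; ℂ) one has ∫_ℝ φ'(s) ( ∫_ℝ k(s,t) u(t) dt ) ds = − ∫_ℝ φ(s) ( ∫_ℝ (∂k/∂s)(s,t) u(t) dt ) ds; i.e., the function s ↦ ∫_ℝ k(s,t)u(t)dt has weak derivative s ↦ ∫_ℝ (∂k/∂s)(s,t)u(t)dt. -/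
/-!
Off the diagonal, both `k` and `∂ₛk` are bounded by `C w(s - t) + C`, where `w` is `|x|^{-α}` cut
off to `(-1, 1)`, which is integrable because `α < 1`: near the diagonal this is the bound of
(B.1), where `|s - t| > 2R` the exponential bound is at most `C`, and at the remaining points of
the strip `|s - t| ≤ 2R` both variables lie on the same side beyond `±R`, so the kernel vanishes.
The `w`-part of the majorant is a convolution integrand, so `φ'(s) k(s,t) u(t)` and
`φ(s) ∂ₛk(s,t) u(t)` are integrable on `ℝ²`. Fubini then reduces the claim to integration by
parts in `s` for each fixed `t`, which is valid because `s ↦ φ(s) k(s,t)` is continuous, compactly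
supported and differentiable except at `s = t`.
-/

open MeasureTheory Filter Topology

noncomputable def singularWeight (α : ℝ) : ℝ → ℝ :=
  (Metric.ball (0 : ℝ) 1).indicator fun x => |x| ^ (-α)

theorem singularWeight_nonneg (α x : ℝ) : 0 ≤ singularWeight α x :=
  Set.indicator_nonneg (fun y _ => Real.rpow_nonneg (abs_nonneg y) _) x

theorem integrable_singularWeight {α : ℝ} (hα : α < 1) : Integrable (singularWeight α) := by
  refine (integrable_indicator_iff Metric.isOpen_ball.measurableSet).2 ?_
  refine integrableOn_ball_of_norm_le_rpow (μ := volume) (C := 1) (by simp) (by simpa using hα)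
    (ae_of_all _ fun x => ?_) (continuous_abs.measurable.pow_const _).aestronglyMeasurable
  rw [one_mul, Real.norm_eq_abs, Real.norm_eq_abs, abs_of_nonneg (by positivity)]

theorem rpow_neg_abs_le_singularWeight_add_one {α : ℝ} (hα : 0 ≤ α) (x : ℝ) :
    |x| ^ (-α) ≤ singularWeight α x + 1 := by
  by_cases hx : x ∈ Metric.ball (0 : ℝ) 1
  · simp [singularWeight, Set.indicator_of_mem hx]
  · have h1 : 1 ≤ |x| := by simpa using hx
    linarith [Real.rpow_le_one_of_one_le_of_nonpos h1 (neg_nonpos.2 hα), singularWeight_nonneg α x]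

theorem same_side_of_abs_sub_le {R s t : ℝ} (hst : |s - t| ≤ 2 * R)
    (hout : ¬(|s| ≤ 3 * R ∧ |t| ≤ 3 * R)) : (R < s ∧ R < t) ∨ (s < -R ∧ t < -R) := by
  rw [abs_le] at hst
  rcases not_and_or.1 hout with h | h <;> rcases lt_abs.1 (not_le.1 h) with h' | h'
  all_goals first | (left; constructor <;> linarith) | (right; constructor <;> linarith)

theorem ae_fst_ne_snd {X : Type*} [MeasurableSpace X] [MeasurableEq X] {μ ν : Measure X}
    [SFinite ν] [NullSingletonClass ν] : ∀ᵐ p ∂μ.prod ν, p.1 ≠ p.2 :=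
  (Measure.ae_prod_iff_ae_ae measurableSet_diagonal.compl).2
    (ae_of_all _ fun x => (ν.ae_ne x).mono fun _ h => Ne.symm h)

structure KernelAssumption {E : Type*} [NormedAddCommGroup E] (R C κ α : ℝ) (K : ℝ × ℝ → E) :
    Prop where
  norm_le_rpow : ∀ s t : ℝ, s ≠ t → |s| ≤ 3 * R → |t| ≤ 3 * R → ‖K (s, t)‖ ≤ C * |s - t| ^ (-α)
  norm_le_exp : ∀ s t : ℝ, s ≠ t → |s - t| > 2 * R → ‖K (s, t)‖ ≤ C * Real.exp (-κ * |s - t|)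
  eq_zero : ∀ s t : ℝ, (R < s ∧ R < t) ∨ (s < -R ∧ t < -R) → K (s, t) = 0

theorem KernelAssumption.norm_le {E : Type*} [NormedAddCommGroup E] {R C κ α : ℝ}
    {K : ℝ × ℝ → E} (hK : KernelAssumption R C κ α K) (hC : 0 ≤ C) (hκ : 0 ≤ κ) (hα : 0 ≤ α)
    {s t : ℝ} (hst : s ≠ t) : ‖K (s, t)‖ ≤ C * singularWeight α (s - t) + C := by
  have hw := singularWeight_nonneg α (s - t)
  rcases le_or_gt |s - t| (2 * R) with hnear | hfar
  · by_cases hbox : |s| ≤ 3 * R ∧ |t| ≤ 3 * R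
    · calc ‖K (s, t)‖ ≤ C * |s - t| ^ (-α) := hK.norm_le_rpow s t hst hbox.1 hbox.2
        _ ≤ C * (singularWeight α (s - t) + 1) :=
          mul_le_mul_of_nonneg_left (rpow_neg_abs_le_singularWeight_add_one hα _) hC
        _ = _ := by ring
    · rw [hK.eq_zero s t (same_side_of_abs_sub_le hnear hbox), norm_zero]
      positivity
  · have hexp : Real.exp (-κ * |s - t|) ≤ 1 :=
      Real.exp_le_one_iff.2 (by nlinarith [abs_nonneg (s - t)])
    calc ‖K (s, t)‖ ≤ C * Real.exp (-κ * |s - t|) := hK.norm_le_exp s t hst hfar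
      _ ≤ C * 1 := mul_le_mul_of_nonneg_left hexp hC
      _ ≤ _ := by nlinarith

section Integrability

variable {𝕜 : Type*} [RCLike 𝕜]

theorem MeasureTheory.Integrable.mul_of_norm_le_add {X : Type*} [MeasurableSpace X] {μ : Measure X}
    {f W : X → 𝕜} {H : X → ℝ} {A c : ℝ} (hf : Integrable f μ) (hfA : ∀ x, ‖f x‖ ≤ A)
    (hH : Integrable H μ) (hW : AEStronglyMeasurable W μ) (hWH : ∀ᵐ x ∂μ, ‖W x‖ ≤ H x + c) :
    Integrable (fun x => f x * W x) μ := by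
  refine ((hH.norm.const_mul A).add (hf.norm.const_mul c)).mono' (hf.1.mul hW) ?_
  filter_upwards [hWH] with x hx
  have hfH : ‖f x‖ * H x ≤ A * ‖H x‖ := calc
    ‖f x‖ * H x ≤ ‖f x‖ * ‖H x‖ := mul_le_mul_of_nonneg_left (Real.le_norm_self _) (norm_nonneg _)
    _ ≤ A * ‖H x‖ := mul_le_mul_of_nonneg_right (hfA x) (norm_nonneg _)
  calc ‖f x * W x‖ = ‖f x‖ * ‖W x‖ := norm_mul _ _
    _ ≤ ‖f x‖ * (H x + c) := mul_le_mul_of_nonneg_left hx (norm_nonneg _)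
    _ ≤ A * ‖H x‖ + c * ‖f x‖ := by linarith

theorem integrable_mul_kernel_mul {f u : ℝ → 𝕜} {W : ℝ × ℝ → 𝕜} {H : ℝ → ℝ} {A c : ℝ}
    (hf : Integrable f) (hfA : ∀ x, ‖f x‖ ≤ A) (hu : Integrable u) (hH : Integrable H)
    (hW : AEStronglyMeasurable W (volume.prod volume))
    (hWH : ∀ᵐ p ∂(volume.prod volume), ‖W p‖ ≤ H (p.1 - p.2) + c) :
    Integrable (fun p : ℝ × ℝ => f p.1 * (W p * u p.2)) (volume.prod volume) := by
  have hconv : Integrable (fun p : ℝ × ℝ => ‖u p.2‖ * ‖H (p.1 - p.2)‖) (volume.prod volume) :=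
    hu.norm.convolution_integrand (ContinuousLinearMap.mul ℝ ℝ) hH.norm
  refine ((hconv.const_mul A).add ((hf.norm.mul_prod hu.norm).const_mul c)).mono'
    (hf.1.comp_fst.mul (hW.mul hu.1.comp_snd)) ?_
  filter_upwards [hWH] with p hp
  have hfH : ‖f p.1‖ * H (p.1 - p.2) ≤ A * ‖H (p.1 - p.2)‖ := calc
    ‖f p.1‖ * H (p.1 - p.2) ≤ ‖f p.1‖ * ‖H (p.1 - p.2)‖ :=
      mul_le_mul_of_nonneg_left (Real.le_norm_self _) (norm_nonneg _)
    _ ≤ A * ‖H (p.1 - p.2)‖ := mul_le_mul_of_nonneg_right (hfA _) (norm_nonneg _)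
  calc ‖f p.1 * (W p * u p.2)‖ = ‖u p.2‖ * (‖f p.1‖ * ‖W p‖) := by
        rw [norm_mul, norm_mul]; ring
    _ ≤ ‖u p.2‖ * (‖f p.1‖ * (H (p.1 - p.2) + c)) := by gcongr
    _ ≤ ‖u p.2‖ * (A * ‖H (p.1 - p.2)‖ + c * ‖f p.1‖) := by gcongr; linarith
    _ = A * (‖u p.2‖ * ‖H (p.1 - p.2)‖) + c * (‖f p.1‖ * ‖u p.2‖) := by ring

end Integrability

theorem HasFDerivAt.hasDerivAt_fst {E : Type*} [NormedAddCommGroup E] [NormedSpace ℝ E]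
    {k : ℝ × ℝ → E} {k' : ℝ × ℝ →L[ℝ] E} {s t : ℝ} (hk : HasFDerivAt k k' (s, t)) :
    HasDerivAt (fun x => k (x, t)) (k' (1, 0)) s :=
  hk.comp_hasDerivAt s ((hasDerivAt_id s).prodMk (hasDerivAt_const s t))

theorem integral_eq_zero_of_hasDerivAt_off_countable {E : Type*} [NormedAddCommGroup E]
    [NormedSpace ℝ E] [CompleteSpace E] {g g' : ℝ → E} {S : Set ℝ} (hS : S.Countable)
    (hg : Continuous g) (hgc : HasCompactSupport g) (hd : ∀ x ∉ S, HasDerivAt g (g' x) x)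
    (hg' : Integrable g') : ∫ x, g' x = 0 := by
  have hlim := intervalIntegral_tendsto_integral hg' tendsto_neg_atTop_atBot tendsto_id
  have hFTC (n : ℝ) : ∫ x in -n..n, g' x = g n - g (-n) :=
    integral_eq_of_hasDerivAt_off_countable g g' hS hg.continuousOn (fun x hx => hd x hx.2)
      hg'.intervalIntegrable
  have hg0 : g =ᶠ[cocompact ℝ] 0 := by
    simpa [coclosedCompact_eq_cocompact] using hasCompactSupport_iff_eventuallyEq.1 hgc
  have hvanish : ∀ᶠ n in atTop, ∫ x in -n..n, g' x = 0 := by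
    filter_upwards [hg0.filter_mono atTop_le_cocompact,
      tendsto_neg_atTop_atBot.eventually (hg0.filter_mono atBot_le_cocompact)] with n h₁ h₂
    simp [hFTC, h₁, h₂]
  exact tendsto_nhds_unique hlim (tendsto_const_nhds.congr' (hvanish.mono fun _ h => h.symm))

theorem integral_deriv_mul_eq_neg_integral_mul_deriv_off_countable {𝕜 : Type*} [RCLike 𝕜]
    {φ v v' : ℝ → 𝕜} {S : Set ℝ} (hS : S.Countable) (hφ : ContDiff ℝ 1 φ)
    (hφc : HasCompactSupport φ) (hv : Continuous v) (hd : ∀ x ∉ S, HasDerivAt v (v' x) x)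
    (hφv' : Integrable fun x => φ x * v' x) :
    ∫ x, deriv φ x * v x = -∫ x, φ x * v' x := by
  have hφ'v : Integrable fun x => deriv φ x * v x :=
    ((hφ.continuous_deriv le_rfl).mul hv).integrable_of_hasCompactSupport hφc.deriv.mul_right
  have hsum := integral_eq_zero_of_hasDerivAt_off_countable hS (hφ.continuous.mul hv)
    hφc.mul_right (fun x hx => (hφ.differentiable one_ne_zero x).hasDerivAt.mul (hd x hx))
    (hφ'v.add hφv')
  rw [integral_add hφ'v hφv'] at hsum
  exact eq_neg_of_add_eq_zero_left hsum

theorem integral_mul_integral_mul_comm {𝕜 X Y : Type*} [RCLike 𝕜] [MeasurableSpace X]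
    [MeasurableSpace Y] {μ : Measure X} {ν : Measure Y} [SFinite μ] [SFinite ν]
    {f : X → 𝕜} {W : X × Y → 𝕜} {u : Y → 𝕜}
    (h : Integrable (fun p => f p.1 * (W p * u p.2)) (μ.prod ν)) :
    ∫ x, f x * ∫ y, W (x, y) * u y ∂ν ∂μ = ∫ y, (∫ x, f x * W (x, y) ∂μ) * u y ∂ν := by
  simp_rw [← integral_const_mul, ← integral_mul_const, mul_assoc]
  exact integral_integral_swap h

theorem stmt_7_general (k : ℝ × ℝ → ℂ) (hk_cont : Continuous k)
    (hk_diff : ∀ p : ℝ × ℝ, p.1 ≠ p.2 → DifferentiableAt ℝ k p)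
    (R C κ α : ℝ) (hC : 0 < C) (hκ : 0 < κ) (hα : α ∈ Set.Ico (0 : ℝ) 1)
    (hbdd1 : ∀ s t : ℝ, s ≠ t → |s| ≤ 3 * R → |t| ≤ 3 * R →
      ‖k (s, t)‖ ≤ C * |s - t| ^ (-α) ∧
      ‖(fderiv ℝ k (s, t)) (1, 0)‖ ≤ C * |s - t| ^ (-α))
    (hbdd2 : ∀ s t : ℝ, s ≠ t → |s - t| > 2 * R →
      ‖k (s, t)‖ ≤ C * Real.exp (-κ * |s - t|) ∧
      ‖(fderiv ℝ k (s, t)) (1, 0)‖ ≤ C * Real.exp (-κ * |s - t|))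
    (hzero : ∀ s t : ℝ, (R < s ∧ R < t) ∨ (s < -R ∧ t < -R) →
      k (s, t) = 0 ∧ (fderiv ℝ k (s, t)) (1, 0) = 0)
    (u φ : ℝ → ℂ) (hu : ContDiff ℝ (⊤ : ℕ∞) u) (hu' : HasCompactSupport u)
    (hφ : ContDiff ℝ (⊤ : ℕ∞) φ) (hφ' : HasCompactSupport φ) :
    ∫ s : ℝ, deriv φ s * ∫ t : ℝ, k (s, t) * u t
      = -∫ s : ℝ, φ s * ∫ t : ℝ, (fderiv ℝ k (s, t)) (1, 0) * u t := by
  set dk : ℝ × ℝ → ℂ := fun p => fderiv ℝ k p (1, 0)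
  have hk : KernelAssumption R C κ α k := ⟨fun s t h h₁ h₂ => (hbdd1 s t h h₁ h₂).1,
    fun s t h h' => (hbdd2 s t h h').1, fun s t h => (hzero s t h).1⟩
  have hdk : KernelAssumption R C κ α dk := ⟨fun s t h h₁ h₂ => (hbdd1 s t h h₁ h₂).2,
    fun s t h h' => (hbdd2 s t h h').2, fun s t h => (hzero s t h).2⟩
  have hdkm : Measurable dk := measurable_fderiv_apply_const ℝ k (1, 0)
  have hH := (integrable_singularWeight hα.2).const_mul C
  have bound {K : ℝ × ℝ → ℂ} (hK : KernelAssumption R C κ α K) :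
      ∀ᵐ p ∂(volume.prod volume), ‖K p‖ ≤ C * singularWeight α (p.1 - p.2) + C :=
    ae_fst_ne_snd.mono fun p hp => hK.norm_le hC.le hκ.le hα.1 hp
  have hφ1 : ContDiff ℝ 1 φ := hφ.of_le (by exact_mod_cast le_top)
  have hφ'c : Continuous (deriv φ) := hφ1.continuous_deriv le_rfl
  obtain ⟨A, hA⟩ := hφ'.exists_bound_of_continuous hφ1.continuous
  obtain ⟨A', hA'⟩ := hφ'.deriv.exists_bound_of_continuous hφ'c
  have hui : Integrable u := hu.continuous.integrable_of_hasCompactSupport hu'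
  have hφi : Integrable φ := hφ1.continuous.integrable_of_hasCompactSupport hφ'
  have hIBP (t : ℝ) : ∫ s, deriv φ s * k (s, t) = -∫ s, φ s * dk (s, t) :=
    integral_deriv_mul_eq_neg_integral_mul_deriv_off_countable (Set.countable_singleton t) hφ1 hφ'
      (hk_cont.comp (.prodMk_left t)) (fun s hs => (hk_diff (s, t) hs).hasFDerivAt.hasDerivAt_fst)
      (hφi.mul_of_norm_le_add hA (hH.comp_sub_right t)
        (hdkm.comp measurable_prodMk_right).aestronglyMeasurable
        ((volume.ae_ne t).mono fun s hs => hdk.norm_le hC.le hκ.le hα.1 hs))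
  calc ∫ s, deriv φ s * ∫ t, k (s, t) * u t
      = ∫ t, (∫ s, deriv φ s * k (s, t)) * u t :=
        integral_mul_integral_mul_comm (integrable_mul_kernel_mul
          (hφ'c.integrable_of_hasCompactSupport hφ'.deriv) hA' hui hH
          hk_cont.aestronglyMeasurable (bound hk))
    _ = -∫ t, (∫ s, φ s * dk (s, t)) * u t := by simp_rw [hIBP, neg_mul, integral_neg]
    _ = -∫ s, φ s * ∫ t, dk (s, t) * u t := by
        rw [integral_mul_integral_mul_comm (integrable_mul_kernel_mul hφi hA hui hH
          hdkm.aestronglyMeasurable (bound hdk))]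

/-- Let `k : ℝ² → ℂ` be continuous, differentiable at every point `(s,t)`
with `s ≠ t`, and suppose that both `k` and its partial derivative `∂k/∂s` satisfy the
Kernel assumption (B.1) with common constants `R, C, κ, α`. Then for all
`u, φ ∈ C_c^∞(ℝ; ℂ)` one has
`∫ φ'(s) (∫ k(s,t) u(t) dt) ds = - ∫ φ(s) (∫ (∂k/∂s)(s,t) u(t) dt) ds`. -/
theorem stmt_7 (k : ℝ × ℝ → ℂ) (hk_cont : Continuous k)
    (hk_diff : ∀ p : ℝ × ℝ, p.1 ≠ p.2 → DifferentiableAt ℝ k p)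
    (R C κ α : ℝ) (hR : 0 < R) (hC : 0 < C) (hκ : 0 < κ) (hα : α ∈ Set.Ico (0 : ℝ) 1)
    (hbdd1 : ∀ s t : ℝ, s ≠ t → |s| ≤ 3 * R → |t| ≤ 3 * R →
      ‖k (s, t)‖ ≤ C * |s - t| ^ (-α) ∧
      ‖(fderiv ℝ k (s, t)) (1, 0)‖ ≤ C * |s - t| ^ (-α))
    (hbdd2 : ∀ s t : ℝ, s ≠ t → |s - t| > 2 * R →
      ‖k (s, t)‖ ≤ C * Real.exp (-κ * |s - t|) ∧
      ‖(fderiv ℝ k (s, t)) (1, 0)‖ ≤ C * Real.exp (-κ * |s - t|))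
    (hzero : ∀ s t : ℝ, (R < s ∧ R < t) ∨ (s < -R ∧ t < -R) →
      k (s, t) = 0 ∧ (fderiv ℝ k (s, t)) (1, 0) = 0)
    (u φ : ℝ → ℂ) (hu : ContDiff ℝ (⊤ : ℕ∞) u) (hu' : HasCompactSupport u)
    (hφ : ContDiff ℝ (⊤ : ℕ∞) φ) (hφ' : HasCompactSupport φ) :
    ∫ s : ℝ, deriv φ s * ∫ t : ℝ, k (s, t) * u t
      = -∫ s : ℝ, φ s * ∫ t : ℝ, (fderiv ℝ k (s, t)) (1, 0) * u t :=
  stmt_7_general k hk_cont hk_diff R C κ α hC hκ hα hbdd1 hbdd2 hzero u φ hu hu' hφ hφ'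
end

section
/- Let C₁ > 0 and let γ : ℝ → ℝ² satisfy C₁·|s − t| ≤ ‖γ(s) − γ(t)‖ ≤ |s − t| for all s, t ∈ ℝ, and let R, κ > 0. Define k₄ : ℝ² \ {0} → ℝ by k₄(y) = ‖y‖^{−1/2} for 0 < ‖y‖ ≤ R and k₄(y) = e^{−κ‖y‖} for ‖y‖ > R. Then sup_{x ∈ ℝ²} ∫_ℝ k₄(x − γ(s)) ds < ∞. -/
/-!
Fix `x` and let `t` minimise `s ↦ ‖x - γ s‖`, which exists because `γ` is continuous and
proper. The triangle inequality through `γ t` and the lower bi-Lipschitz bound give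
`‖x - γ s‖ ≥ (C₁ / 2) |s - t|`. For radii `ρ ≥ r > 0` the kernel is dominated by
`r ^ (-1/2) 𝟙_{r ≤ R} + e^{-κ r}`, so after translating by `t` the integral is bounded by the
integral of this majorant at `(C₁ / 2) |u|`, which is finite and independent of `x`.
-/
open MeasureTheory Set Filter

noncomputable section

/-- `k₄ y = k₄Radial R κ ‖y‖`; at `ρ = 0` it takes the junk value `0 ^ (-1/2) = 0`. -/
def k₄Radial (R κ ρ : ℝ) : ℝ := if ρ ≤ R then ρ ^ (-(1 / 2 : ℝ)) else Real.exp (-κ * ρ)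

/-- The jump of `k₄Radial` at `R` may go upwards, so a monotone majorant has to add both pieces. -/
def k₄Majorant (R κ r : ℝ) : ℝ := (Iic R).indicator (· ^ (-(1 / 2 : ℝ))) r + Real.exp (-κ * r)

lemma k₄Radial_le_k₄Majorant {R κ r ρ : ℝ} (hκ : 0 ≤ κ) (hr : 0 < r) (hrρ : r ≤ ρ) :
    k₄Radial R κ ρ ≤ k₄Majorant R κ r := by
  have hexp : Real.exp (-κ * ρ) ≤ Real.exp (-κ * r) := Real.exp_le_exp.2 (by nlinarith)
  unfold k₄Radial k₄Majorant
  split_ifs with hρR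
  · have hrR : r ∈ Iic R := hrρ.trans hρR
    rw [indicator_of_mem hrR]
    have := Real.rpow_le_rpow_of_nonpos hr hrρ (by norm_num : -(1 / 2 : ℝ) ≤ 0)
    linarith [Real.exp_pos (-κ * r)]
  · have : 0 ≤ (Iic R).indicator (· ^ (-(1 / 2 : ℝ))) r :=
      indicator_apply_nonneg fun _ => Real.rpow_nonneg hr.le _
    linarith

lemma integrableOn_k₄Majorant_Ioi (R : ℝ) {κ : ℝ} (hκ : 0 < κ) :
    IntegrableOn (k₄Majorant R κ) (Ioi 0) := by
  have hsing : IntegrableOn ((Iic R).indicator (· ^ (-(1 / 2 : ℝ)))) (Ioi 0) := by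
    rw [IntegrableOn, integrable_indicator_iff measurableSet_Iic, IntegrableOn,
      Measure.restrict_restrict measurableSet_Iic, Iic_inter_Ioi]
    rcases le_total R 0 with hR | hR
    · simp [Ioc_eq_empty_of_le hR]
    · exact (intervalIntegrable_iff_integrableOn_Ioc_of_le hR).1 <|
        intervalIntegral.intervalIntegrable_rpow' (by norm_num)
  exact hsing.add (by simpa only [neg_mul] using exp_neg_integrableOn_Ioi 0 hκ)

lemma integrable_k₄Majorant_abs (R : ℝ) {κ : ℝ} (hκ : 0 < κ) :
    Integrable fun u : ℝ => k₄Majorant R κ |u| := by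
  have := (integrable_fun_norm_addHaar (volume : Measure ℝ) (f := k₄Majorant R κ)).2
  simpa using this (by simpa using integrableOn_k₄Majorant_Ioi R hκ)

lemma exists_forall_mul_dist_le_dist {X Y : Type*} [MetricSpace X] [ProperSpace X] [Nonempty X]
    [PseudoMetricSpace Y] {γ : X → Y} {C : ℝ} (hγ : Continuous γ) (hC : 0 < C)
    (hanti : ∀ s t, C * dist s t ≤ dist (γ s) (γ t)) (y : Y) :
    ∃ t, ∀ s, C / 2 * dist s t ≤ dist y (γ s) := by
  obtain ⟨s₀⟩ := ‹Nonempty X›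
  have hcoercive : Tendsto (fun s => dist y (γ s)) (cocompact X) atTop := by
    refine tendsto_atTop_mono (fun s => ?_) <| tendsto_atTop_add_const_right _ (-dist y (γ s₀))
      ((tendsto_dist_right_cocompact_atTop s₀).const_mul_atTop hC)
    have := hanti s s₀
    have := dist_triangle_left (γ s) (γ s₀) y
    linarith
  obtain ⟨t, ht⟩ := (continuous_const.dist hγ).exists_forall_le' s₀
    (hcoercive.eventually_ge_atTop _)
  refine ⟨t, fun s => ?_⟩
  have := hanti s t
  have := dist_triangle_left (γ s) (γ t) y
  have := ht s
  linarith

end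

theorem stmt_10_general (C₁ : ℝ) (hC₁ : 0 < C₁) (γ : ℝ → EuclideanSpace ℝ (Fin 2))
    (hbil : ∀ s t : ℝ, C₁ * |s - t| ≤ ‖γ s - γ t‖ ∧ ‖γ s - γ t‖ ≤ |s - t|)
    (R κ : ℝ) (hκ : 0 < κ) :
    (⨆ x : EuclideanSpace ℝ (Fin 2),
      ∫⁻ s : ℝ, ENNReal.ofReal
        (if ‖x - γ s‖ ≤ R then ‖x - γ s‖ ^ (-(1 / 2 : ℝ))
         else Real.exp (-κ * ‖x - γ s‖))) < ⊤ := by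
  set c := C₁ / 2
  have hc : 0 < c := by positivity
  have hγ : Continuous γ := LipschitzWith.continuous (K := 1) <|
    .of_dist_le_mul fun s t => by simpa [dist_eq_norm, Real.dist_eq] using (hbil s t).2
  refine lt_of_le_of_lt (iSup_le fun x => ?_)
    ((integrable_k₄Majorant_abs R hκ).comp_mul_left' hc.ne').lintegral_lt_top
  obtain ⟨t, ht⟩ := exists_forall_mul_dist_le_dist hγ hC₁
    (fun s t => by simpa [dist_eq_norm, Real.dist_eq] using (hbil s t).1) x
  have hmajor : ∀ᵐ s : ℝ, ENNReal.ofReal (k₄Radial R κ ‖x - γ s‖) ≤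
      ENNReal.ofReal (k₄Majorant R κ |c * (s - t)|) := by
    filter_upwards [Measure.ae_ne volume t] with s hst
    refine ENNReal.ofReal_le_ofReal (k₄Radial_le_k₄Majorant hκ.le
      (abs_pos.2 (mul_ne_zero hc.ne' (sub_ne_zero.2 hst))) ?_)
    rw [abs_mul, abs_of_pos hc, ← Real.dist_eq, ← dist_eq_norm]
    exact ht s
  calc ∫⁻ s, ENNReal.ofReal (k₄Radial R κ ‖x - γ s‖)
      ≤ ∫⁻ s, ENNReal.ofReal (k₄Majorant R κ |c * (s - t)|) := lintegral_mono_ae hmajor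
    _ = ∫⁻ u, ENNReal.ofReal (k₄Majorant R κ |c * u|) :=
      lintegral_sub_right_eq_self (fun u => ENNReal.ofReal (k₄Majorant R κ |c * u|)) t

/-- Let `C₁ > 0` and `γ : ℝ → ℝ²` satisfy
`C₁ |s - t| ≤ ‖γ s - γ t‖ ≤ |s - t|` for all `s, t`, and let `R, κ > 0`. With
`k₄ y = ‖y‖^(-1/2)` for `0 < ‖y‖ ≤ R` and `k₄ y = e^(-κ ‖y‖)` for `‖y‖ > R`, one has
`sup_{x ∈ ℝ²} ∫_ℝ k₄ (x - γ s) ds < ∞`. (The integrals are taken in the extended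
nonnegative reals, so finiteness of the supremum also asserts finiteness of each
integral.) -/
theorem stmt_10 (C₁ : ℝ) (hC₁ : 0 < C₁) (γ : ℝ → EuclideanSpace ℝ (Fin 2))
    (hbil : ∀ s t : ℝ, C₁ * |s - t| ≤ ‖γ s - γ t‖ ∧ ‖γ s - γ t‖ ≤ |s - t|)
    (R κ : ℝ) (hR : 0 < R) (hκ : 0 < κ) :
    (⨆ x : EuclideanSpace ℝ (Fin 2),
      ∫⁻ s : ℝ, ENNReal.ofReal
        (if ‖x - γ s‖ ≤ R then ‖x - γ s‖ ^ (-(1 / 2 : ℝ))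
         else Real.exp (-κ * ‖x - γ s‖))) < ⊤ :=
  stmt_10_general C₁ hC₁ γ hbil R κ hκ
end

section
/- Let C₁ > 0 and let γ : ℝ → ℝ² satisfy C₁·|s − t| ≤ ‖γ(s) − γ(t)‖ ≤ |s − t| for all s, t ∈ ℝ, and let R, κ > 0. Then sup_{t ∈ ℝ} ∫_ℝ h(s,t) ds < ∞, where for s ≠ t we set h(s,t) = |log ‖γ(s) − γ(t)‖| + 1 if ‖γ(s) − γ(t)‖ ≤ R, and h(s,t) = e^{−κ‖γ(s) − γ(t)‖} if ‖γ(s) − γ(t)‖ > R. -/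
/-!
For a bi-Lipschitz curve, `‖γ s - γ t‖` is comparable to `|s - t|`, so the kernel `h (s, t)` is
dominated by a function `g (s - t)` of the parameter difference alone: by
`|log C₁| + |log (s - t)| + 1` on `|s - t| ≤ R / C₁`, integrable because `log` is locally
integrable, and by `exp (-κ C₁ |s - t|)` everywhere else. Translation invariance of Lebesgue
measure then bounds every `∫ h (s, t) ds` by `∫ g`.
-/

open MeasureTheory Set Real intervalIntegral

theorem iSup_lintegral_lt_top_of_le_ofReal_sub {G : Type*} [MeasurableSpace G] [AddGroup G]
    [MeasurableAdd G] {μ : Measure G} [μ.IsAddRightInvariant] {F : G → G → ENNReal} {g : G → ℝ}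
    (hg : Integrable g μ) (hF : ∀ s t, F s t ≤ ENNReal.ofReal (g (s - t))) :
    ⨆ t, ∫⁻ s, F s t ∂μ < ⊤ := by
  refine (iSup_le fun t => ?_).trans_lt hg.lintegral_lt_top
  calc ∫⁻ s, F s t ∂μ ≤ ∫⁻ s, ENNReal.ofReal (g (s - t)) ∂μ := lintegral_mono (hF · t)
    _ = ∫⁻ u, ENNReal.ofReal (g u) ∂μ :=
      lintegral_sub_right_eq_self (fun u => ENNReal.ofReal (g u)) t

theorem integrable_exp_neg_mul_abs {c : ℝ} (hc : 0 < c) :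
    Integrable fun x : ℝ => exp (-c * |x|) := by
  have hIoi : IntegrableOn (fun x : ℝ => exp (-c * |x|)) (Ioi 0) :=
    (exp_neg_integrableOn_Ioi 0 hc).congr_fun (fun x hx => by rw [abs_of_pos hx])
      measurableSet_Ioi
  rw [← integrableOn_univ, ← Iio_union_Ici (a := (0 : ℝ)), integrableOn_union,
    integrableOn_Ici_iff_integrableOn_Ioi]
  refine ⟨?_, hIoi⟩
  rw [← (Measure.measurePreserving_neg (volume : Measure ℝ)).integrableOn_comp_preimage
    (Homeomorph.neg ℝ).measurableEmbedding]
  simpa only [Function.comp_def, abs_neg, neg_preimage, neg_Iio, neg_neg, neg_zero] using hIoi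

theorem abs_log_le_of_mul_abs_le_of_le_abs {c x u : ℝ} (hc : 0 < c) (hlow : c * |u| ≤ x)
    (hup : x ≤ |u|) : |log x| ≤ |log c| + |log u| := by
  rcases eq_or_ne u 0 with rfl | hu
  · -- here `x = 0`, and the junk value `log 0 = 0` makes the bound trivial
    obtain rfl : x = 0 := le_antisymm (by simpa using hup) (by simpa using hlow)
    simp
  have hpos : 0 < c * |u| := by positivity
  calc |log x| ≤ max |log (c * |u|)| |log (|u|)| :=
        abs_le_max_abs_abs (log_le_log hpos hlow) (log_le_log (hpos.trans_le hlow) hup)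
    _ ≤ |log c| + |log u| := by
      rw [log_mul hc.ne' (abs_ne_zero.2 hu), log_abs]
      exact max_le (abs_add_le _ _) (le_add_of_nonneg_left (abs_nonneg _))

/-- Dominates the kernel `h` as a function of `u = s - t`. -/
noncomputable def kernelMajorant (C₁ R κ : ℝ) (u : ℝ) : ℝ :=
  (Icc (-(R / C₁)) (R / C₁)).indicator (fun u => |log C₁| + |log u| + 1) u +
    exp (-(κ * C₁) * |u|)

theorem integrable_kernelMajorant {C₁ κ : ℝ} (hC₁ : 0 < C₁) (hκ : 0 < κ) (R : ℝ) :
    Integrable (kernelMajorant C₁ R κ) := by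
  have habs_log : IntegrableOn (fun u => |log u|) (Icc (-(R / C₁)) (R / C₁)) :=
    (((intervalIntegrable_iff' (f := log)).1 intervalIntegrable_log').mono_set
      Icc_subset_uIcc).norm
  have hlog : IntegrableOn (fun u => |log C₁| + |log u| + 1) (Icc (-(R / C₁)) (R / C₁)) :=
    ((integrableOn_const measure_Icc_lt_top.ne).add habs_log).add
      (integrableOn_const measure_Icc_lt_top.ne)
  exact (hlog.integrable_indicator measurableSet_Icc).add
    (integrable_exp_neg_mul_abs (mul_pos hκ hC₁))

theorem ite_le_kernelMajorant {C₁ R κ x u : ℝ} (hC₁ : 0 < C₁) (hκ : 0 ≤ κ)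
    (hlow : C₁ * |u| ≤ x) (hup : x ≤ |u|) :
    (if x ≤ R then |log x| + 1 else exp (-κ * x)) ≤ kernelMajorant C₁ R κ u := by
  unfold kernelMajorant
  split_ifs with hxR
  · have hu : u ∈ Icc (-(R / C₁)) (R / C₁) :=
      abs_le.1 ((le_div_iff₀' hC₁).2 (hlow.trans hxR))
    rw [indicator_of_mem hu]
    have := abs_log_le_of_mul_abs_le_of_le_abs hC₁ hlow hup
    have := exp_pos (-(κ * C₁) * |u|)
    linarith
  · have hind : 0 ≤ (Icc (-(R / C₁)) (R / C₁)).indicator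
        (fun u => |log C₁| + |log u| + 1) u :=
      indicator_nonneg (fun _ _ => by positivity) u
    have hexp : exp (-κ * x) ≤ exp (-(κ * C₁) * |u|) :=
      exp_le_exp.2 (by nlinarith)
    linarith

theorem stmt_11_general (C₁ : ℝ) (hC₁ : 0 < C₁) (γ : ℝ → EuclideanSpace ℝ (Fin 2))
    (hbil : ∀ s t : ℝ, C₁ * |s - t| ≤ ‖γ s - γ t‖ ∧ ‖γ s - γ t‖ ≤ |s - t|)
    (R κ : ℝ) (hκ : 0 < κ) :
    (⨆ t : ℝ,
      ∫⁻ s : ℝ, ENNReal.ofReal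
        (if ‖γ s - γ t‖ ≤ R then |Real.log ‖γ s - γ t‖| + 1
         else Real.exp (-κ * ‖γ s - γ t‖))) < ⊤ :=
  iSup_lintegral_lt_top_of_le_ofReal_sub (integrable_kernelMajorant hC₁ hκ R) fun s t =>
    ENNReal.ofReal_le_ofReal (ite_le_kernelMajorant hC₁ hκ.le (hbil s t).1 (hbil s t).2)

/-- Let `C₁ > 0` and `γ : ℝ → ℝ²` satisfy
`C₁ |s - t| ≤ ‖γ s - γ t‖ ≤ |s - t|` for all `s, t`, and let `R, κ > 0`. With
`h (s, t) = |log ‖γ s - γ t‖| + 1` if `‖γ s - γ t‖ ≤ R` and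
`h (s, t) = e^(-κ ‖γ s - γ t‖)` if `‖γ s - γ t‖ > R`, one has
`sup_{t ∈ ℝ} ∫_ℝ h (s, t) ds < ∞`. (The integrals are taken in the extended
nonnegative reals.) -/
theorem stmt_11 (C₁ : ℝ) (hC₁ : 0 < C₁) (γ : ℝ → EuclideanSpace ℝ (Fin 2))
    (hbil : ∀ s t : ℝ, C₁ * |s - t| ≤ ‖γ s - γ t‖ ∧ ‖γ s - γ t‖ ≤ |s - t|)
    (R κ : ℝ) (hR : 0 < R) (hκ : 0 < κ) :
    (⨆ t : ℝ,
      ∫⁻ s : ℝ, ENNReal.ofReal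
        (if ‖γ s - γ t‖ ≤ R then |Real.log ‖γ s - γ t‖| + 1
         else Real.exp (-κ * ‖γ s - γ t‖))) < ⊤ :=
  stmt_11_general C₁ hC₁ γ hbil R κ hκ
end

section
/- Let 𝛄 : ℝ → ℂ be twice continuously differentiable with |𝛄'(s)| = 1 for all s ∈ ℝ, and assume there is C₁ > 0 with C₁·|s − t| ≤ |𝛄(s) − 𝛄(t)| for all s, t ∈ ℝ. Then the function (s,t) ↦ 1/(s − t) − 𝛄'(t)/(𝛄(s) − 𝛄(t)), defined for s ≠ t, extends to a continuous function F : ℝ² → ℂ whose value on the diagonal is F(t,t) = 𝛄''(t)/(2·𝛄'(t)). -/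
/-!
With `D(s,t) = ∫₀¹ 𝛄'(t + u(s - t)) du` and `K(s,t) = ∫₀¹ (1 - u) 𝛄''(t + u(s - t)) du` we have
`𝛄 s - 𝛄 t = (s - t) D(s,t)` and, integrating by parts, `D(s,t) - 𝛄'(t) = (s - t) K(s,t)`.
Hence `1/(s - t) - 𝛄'(t)/(𝛄 s - 𝛄 t) = K/D` off the diagonal. Both integrals depend continuously
on `(s,t)`, and `D` never vanishes: off the diagonal by the lower bi-Lipschitz bound, on it
because `D(t,t) = 𝛄'(t)` is a unit. So `F = K/D` is the continuous extension, and
`F(t,t) = (𝛄''(t)/2)/𝛄'(t)`.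
-/

open intervalIntegral

section SegmentMean

variable {E : Type*} [NormedAddCommGroup E] [NormedSpace ℝ E]

noncomputable def segmentMean (w : ℝ → ℝ) (f : ℝ → E) (s t : ℝ) : E :=
  ∫ u in (0 : ℝ)..1, w u • f (t + u * (s - t))

theorem continuous_segmentMean {w : ℝ → ℝ} {f : ℝ → E} (hw : Continuous w)
    (hf : Continuous f) : Continuous fun p : ℝ × ℝ => segmentMean w f p.1 p.2 :=
  continuous_parametric_intervalIntegral_of_continuous' (by fun_prop) 0 1

theorem segmentMean_self [CompleteSpace E] (w : ℝ → ℝ) (f : ℝ → E) (t : ℝ) :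
    segmentMean w f t t = (∫ u in (0 : ℝ)..1, w u) • f t := by
  simp [segmentMean]

theorem segmentMean_one_self [CompleteSpace E] (f : ℝ → E) (t : ℝ) :
    segmentMean 1 f t t = f t := by
  simp [segmentMean_self]

theorem segmentMean_one_sub_self [CompleteSpace E] (f : ℝ → E) (t : ℝ) :
    segmentMean (fun u => 1 - u) f t t = (2⁻¹ : ℝ) • f t := by
  rw [segmentMean_self, integral_sub intervalIntegrable_const intervalIntegrable_id]
  norm_num

theorem hasDerivAt_comp_segment {f f' : ℝ → E} (hf : ∀ x, HasDerivAt f (f' x) x)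
    (s t u : ℝ) :
    HasDerivAt (fun u => f (t + u * (s - t))) ((s - t) • f' (t + u * (s - t))) u :=
  (hf _).scomp u (((hasDerivAt_id u).mul_const (s - t)).const_add t |>.congr_deriv (by simp))

theorem sub_smul_segmentMean_one [CompleteSpace E] {f f' : ℝ → E}
    (hf : ∀ x, HasDerivAt f (f' x) x) (hf' : Continuous f') (s t : ℝ) :
    (s - t) • segmentMean 1 f' s t = f s - f t := by
  have := integral_eq_sub_of_hasDerivAt (fun u _ => hasDerivAt_comp_segment hf s t u)
    ((by fun_prop : Continuous _).intervalIntegrable 0 1)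
  simpa [segmentMean, intervalIntegral.integral_smul] using this

theorem sub_smul_segmentMean_one_sub [CompleteSpace E] {f f' : ℝ → E}
    (hf : ∀ x, HasDerivAt f (f' x) x) (hf' : Continuous f') (s t : ℝ) :
    (s - t) • segmentMean (fun u => 1 - u) f' s t = segmentMean 1 f s t - f t := by
  have hfc : Continuous f := continuous_iff_continuousAt.2 fun x => (hf x).continuousAt
  have hparts := integral_smul_deriv_eq_deriv_smul_of_hasDerivAt (a := 0) (b := 1)
    (u := fun u : ℝ => 1 - u) (u' := fun _ => -1) (v := fun u => f (t + u * (s - t)))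
    (v' := fun u => (s - t) • f' (t + u * (s - t))) (by fun_prop) (by fun_prop)
    (fun u _ => by simpa using (hasDerivAt_id u).const_sub 1)
    (fun u _ => hasDerivAt_comp_segment hf s t u) intervalIntegrable_const
    ((by fun_prop : Continuous _).intervalIntegrable _ _)
  simp only [segmentMean, ← intervalIntegral.integral_smul]
  simp_rw [smul_comm (s - t)]
  rw [hparts]
  simp [integral_neg, neg_add_eq_sub]

theorem segmentMean_one_ne_zero [CompleteSpace E] {f f' : ℝ → E}
    (hf : ∀ x, HasDerivAt f (f' x) x) (hf' : Continuous f') (hf'_ne : ∀ x, f' x ≠ 0)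
    {C : ℝ} (hC : 0 < C) (hlow : ∀ s t, C * |s - t| ≤ ‖f s - f t‖) (s t : ℝ) :
    segmentMean 1 f' s t ≠ 0 := by
  rcases eq_or_ne s t with rfl | hst
  · rw [segmentMean_one_self]
    exact hf'_ne s
  · intro h0
    have hst_le := hlow s t
    rw [← sub_smul_segmentMean_one hf hf' s t, h0, smul_zero, norm_zero] at hst_le
    exact (mul_pos hC (abs_pos.2 (sub_ne_zero.2 hst))).not_ge hst_le

end SegmentMean

/-- Let `𝛄 : ℝ → ℂ` be twice continuously differentiable with
`|𝛄'(s)| = 1` for all `s`, and assume `C₁ |s - t| ≤ |𝛄 s - 𝛄 t|` for all `s, t` with some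
`C₁ > 0`. Then `(s,t) ↦ 1/(s - t) - 𝛄'(t)/(𝛄 s - 𝛄 t)`, defined for `s ≠ t`, extends to a
continuous function `F : ℝ² → ℂ` with `F (t, t) = 𝛄''(t) / (2 𝛄'(t))`. -/
theorem stmt_12 (g : ℝ → ℂ) (hg : ContDiff ℝ 2 g)
    (hunit : ∀ s : ℝ, ‖deriv g s‖ = 1)
    (C₁ : ℝ) (hC₁ : 0 < C₁)
    (hlow : ∀ s t : ℝ, C₁ * |s - t| ≤ ‖g s - g t‖) :
    ∃ F : ℝ × ℝ → ℂ, Continuous F ∧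
      (∀ s t : ℝ, s ≠ t →
        F (s, t) = 1 / ((s : ℂ) - (t : ℂ)) - deriv g t / (g s - g t)) ∧
      (∀ t : ℝ, F (t, t) = deriv (deriv g) t / (2 * deriv g t)) := by
  obtain ⟨hg_diff, -, hg'⟩ := (contDiff_succ_iff_deriv (n := 1)).mp hg
  obtain ⟨hg'_diff, hg''⟩ := contDiff_one_iff_deriv.mp hg'
  have hdg : ∀ x, HasDerivAt g (deriv g x) x := fun x => (hg_diff x).hasDerivAt
  have hddg : ∀ x, HasDerivAt (deriv g) (deriv (deriv g) x) x :=
    fun x => (hg'_diff x).hasDerivAt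
  have hderiv_ne : ∀ t, deriv g t ≠ 0 := fun t h => by simpa [h] using hunit t
  set D := segmentMean 1 (deriv g)
  set K := segmentMean (fun u => 1 - u) (deriv (deriv g))
  have hD_ne : ∀ s t, D s t ≠ 0 :=
    segmentMean_one_ne_zero hdg hg'.continuous hderiv_ne hC₁ hlow
  refine ⟨fun p => K p.1 p.2 / D p.1 p.2,
    (continuous_segmentMean (by fun_prop) hg'').div
      (continuous_segmentMean continuous_const hg'.continuous) fun p => hD_ne p.1 p.2, ?_, ?_⟩
  · intro s t hst
    have hst' : (s : ℂ) - t ≠ 0 := sub_ne_zero.2 (by exact_mod_cast hst)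
    have hD : ((s : ℂ) - t) * D s t = g s - g t := by
      simpa [Complex.real_smul] using sub_smul_segmentMean_one hdg hg'.continuous s t
    have hK : ((s : ℂ) - t) * K s t = D s t - deriv g t := by
      simpa [Complex.real_smul] using sub_smul_segmentMean_one_sub hddg hg'' s t
    rw [← hD]
    field_simp [hD_ne s t]
    linear_combination hK
  · intro t
    simp only [K, D, segmentMean_one_self, segmentMean_one_sub_self, Complex.real_smul]
    field_simp [hderiv_ne t]
    push_cast
    ring
end

section
/- Let η, τ, λ, m ∈ ℝ with m ≠ 0, let c > 0, set d = η² − τ² − λ² and g(p) = λ + 2pc/√(p² + (mc)²), and assume (d/4 − c²)² ≠ λ²c². Then there exist constants C > 0 and P > 0 such that for every sign ς ∈ {+1, −1} and every p ∈ ℝ with |p| ≥ P one has |η + ς·√(τ² + g(p)²)| ≥ C; equivalently, |√(p²+1)·(η + ς√(τ² + g(p)²))| ≥ C·√(p² + 1) for |p| ≥ P. -/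
/-!
Write `g p = lam + 2 p c / √(p² + (m c)²)`. As `p → +∞`, `g p → lam + 2c`, so
`η + ς √(τ² + g(p)²)` tends to `η + ς √(τ² + (lam + 2c)²)`. This limit vanishes only if
`η² = τ² + (lam + 2c)²`, i.e. `d/4 - c² = lam c`, which the non-criticality condition excludes;
hence the expression stays away from `0` for large `p`. Since `g_lam (-p) = -g_{-lam} p` and the
condition depends on `lam` only through `lam²`, the case `p → -∞` is the same one for `-lam`.
-/

open Filter Topology

namespace DiracDeltaShell

/-- The function `g`, the off-diagonal entry of the symbol `θ₁(p)`. -/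
noncomputable def offDiag (lam m c p : ℝ) : ℝ := lam + 2 * p * c / √(p ^ 2 + (m * c) ^ 2)

lemma offDiag_neg (lam m c p : ℝ) : offDiag lam m c (-p) = -offDiag (-lam) m c p := by
  simp only [offDiag, neg_sq]
  ring

lemma tendsto_div_sqrt_sq_add_sq_atTop (k : ℝ) :
    Tendsto (fun p : ℝ => p / √(p ^ 2 + k ^ 2)) atTop (𝓝 1) := by
  have hratio : Tendsto (fun p : ℝ => k / p) atTop (𝓝 0) :=
    tendsto_const_nhds.div_atTop tendsto_id
  have hlim : Tendsto (fun p : ℝ => (√(1 + (k / p) ^ 2))⁻¹) atTop (𝓝 1) := by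
    simpa using ((hratio.pow 2).const_add 1).sqrt.inv₀ (by simp)
  refine hlim.congr' ?_
  filter_upwards [eventually_gt_atTop 0] with p hp
  have hfactor : p ^ 2 + k ^ 2 = p ^ 2 * (1 + (k / p) ^ 2) := by
    field_simp
  rw [hfactor, Real.sqrt_mul (sq_nonneg p), Real.sqrt_sq hp.le, div_mul_cancel_left₀ hp.ne',
    inv_eq_one_div]

lemma tendsto_offDiag_atTop (lam m c : ℝ) :
    Tendsto (offDiag lam m c) atTop (𝓝 (lam + 2 * c)) := by
  have h := ((tendsto_div_sqrt_sq_add_sq_atTop (m * c)).const_mul (2 * c)).const_add lam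
  rw [mul_one] at h
  refine h.congr fun p => ?_
  simp only [offDiag]
  ring

lemma add_mul_sqrt_ne_zero {η τ lam c ς : ℝ}
    (hnc : ((η ^ 2 - τ ^ 2 - lam ^ 2) / 4 - c ^ 2) ^ 2 ≠ lam ^ 2 * c ^ 2)
    (hς : ς = 1 ∨ ς = -1) :
    η + ς * √(τ ^ 2 + (lam + 2 * c) ^ 2) ≠ 0 := by
  intro h
  have hsq : ς ^ 2 = 1 := by rcases hς with rfl | rfl <;> norm_num
  have hη : η ^ 2 = τ ^ 2 + (lam + 2 * c) ^ 2 := by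
    have hη' : η = -(ς * √(τ ^ 2 + (lam + 2 * c) ^ 2)) := by linarith
    rw [hη', neg_sq, mul_pow, hsq, one_mul, Real.sq_sqrt (by positivity)]
  have hcrit : (η ^ 2 - τ ^ 2 - lam ^ 2) / 4 - c ^ 2 = lam * c := by
    linear_combination hη / 4
  exact hnc (by rw [hcrit]; ring)

lemma exists_pos_eventually_le_abs (η τ lam m c : ℝ)
    (hnc : ((η ^ 2 - τ ^ 2 - lam ^ 2) / 4 - c ^ 2) ^ 2 ≠ lam ^ 2 * c ^ 2) {ς : ℝ}
    (hς : ς = 1 ∨ ς = -1) :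
    ∃ C > 0, ∀ᶠ p in atTop, C ≤ |η + ς * √(τ ^ 2 + offDiag lam m c p ^ 2)| := by
  set L := η + ς * √(τ ^ 2 + (lam + 2 * c) ^ 2)
  have hL : 0 < |L| := abs_pos.2 (add_mul_sqrt_ne_zero hnc hς)
  have hlim : Tendsto (fun p => |η + ς * √(τ ^ 2 + offDiag lam m c p ^ 2)|) atTop (𝓝 |L|) :=
    (((((tendsto_offDiag_atTop lam m c).pow 2).const_add _).sqrt.const_mul ς).const_add η).abs
  exact ⟨|L| / 2, half_pos hL,
    (hlim.eventually_const_lt (half_lt_self hL)).mono fun _ h => h.le⟩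

lemma exists_pos_forall_ge_le_abs (η τ lam m c : ℝ)
    (hnc : ((η ^ 2 - τ ^ 2 - lam ^ 2) / 4 - c ^ 2) ^ 2 ≠ lam ^ 2 * c ^ 2) :
    ∃ C > 0, ∃ P, ∀ ς : ℝ, ς = 1 ∨ ς = -1 → ∀ p, P ≤ p →
      C ≤ |η + ς * √(τ ^ 2 + offDiag lam m c p ^ 2)| := by
  obtain ⟨C₁, hC₁, h₁⟩ := exists_pos_eventually_le_abs η τ lam m c hnc (ς := 1) (Or.inl rfl)
  obtain ⟨C₂, hC₂, h₂⟩ := exists_pos_eventually_le_abs η τ lam m c hnc (ς := -1) (Or.inr rfl)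
  obtain ⟨P, hP⟩ := eventually_atTop.1 (h₁.and h₂)
  refine ⟨min C₁ C₂, lt_min hC₁ hC₂, P, fun ς hς p hp => ?_⟩
  rcases hς with rfl | rfl
  · exact (min_le_left _ _).trans (hP p hp).1
  · exact (min_le_right _ _).trans (hP p hp).2

end DiracDeltaShell

open DiracDeltaShell in
theorem stmt_15_general (η τ lam m c : ℝ)
    (hnc : ((η ^ 2 - τ ^ 2 - lam ^ 2) / 4 - c ^ 2) ^ 2 ≠ lam ^ 2 * c ^ 2) :
    ∃ C > 0, ∃ P > 0, ∀ ς : ℝ, ς = 1 ∨ ς = -1 → ∀ p : ℝ, |p| ≥ P →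
      C ≤ |η + ς * Real.sqrt (τ ^ 2 +
        (lam + 2 * p * c / Real.sqrt (p ^ 2 + (m * c) ^ 2)) ^ 2)| := by
  obtain ⟨C₁, hC₁, P₁, hpos⟩ := exists_pos_forall_ge_le_abs η τ lam m c hnc
  obtain ⟨C₂, hC₂, P₂, hneg⟩ := exists_pos_forall_ge_le_abs η τ (-lam) m c (by rwa [neg_sq])
  refine ⟨min C₁ C₂, lt_min hC₁ hC₂, max 1 (max P₁ P₂), by positivity, fun ς hς p hp => ?_⟩
  change min C₁ C₂ ≤ |η + ς * √(τ ^ 2 + offDiag lam m c p ^ 2)|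
  rcases le_abs'.1 hp with hp | hp
  · have hle := hneg ς hς (-p) (by linarith [le_max_right P₁ P₂, le_max_right 1 (max P₁ P₂)])
    rw [← neg_neg p, offDiag_neg, neg_sq]
    exact (min_le_right _ _).trans hle
  · exact (min_le_left _ _).trans
      (hpos ς hς p (by linarith [le_max_left P₁ P₂, le_max_right 1 (max P₁ P₂)]))

/-- Let `η, τ, λ, m ∈ ℝ` with `m ≠ 0`, `c > 0`, `d = η² - τ² - λ²`,
`g p = λ + 2 p c / √(p² + (m c)²)`, and assume `(d/4 - c²)² ≠ λ² c²`. Then there are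
`C > 0` and `P > 0` such that for every sign `ς ∈ {+1, -1}` and every `p` with `|p| ≥ P`
one has `|η + ς √(τ² + (g p)²)| ≥ C`. -/
theorem stmt_15 (η τ lam m c : ℝ) (hm : m ≠ 0) (hc : 0 < c)
    (hnc : ((η ^ 2 - τ ^ 2 - lam ^ 2) / 4 - c ^ 2) ^ 2 ≠ lam ^ 2 * c ^ 2) :
    ∃ C > 0, ∃ P > 0, ∀ ς : ℝ, ς = 1 ∨ ς = -1 → ∀ p : ℝ, |p| ≥ P →
      C ≤ |η + ς * Real.sqrt (τ ^ 2 +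
        (lam + 2 * p * c / Real.sqrt (p ^ 2 + (m * c) ^ 2)) ^ 2)| :=
  stmt_15_general η τ lam m c hnc
end

section
/- Let η, τ, λ, m ∈ ℝ with m ≠ 0, let c > 0, set d = η² − τ² − λ² and g(p) = λ + 2pc/√(p² + (mc)²), and assume (d/4 − c²)² = λ²c². Then there exists a sign ς ∈ {+1, −1} such that the function p ↦ √(p² + 1)·(η + ς·√(τ² + g(p)²)) is bounded on (0, ∞) or bounded on (−∞, 0). -/
private lemma sqrt_lip_one_sided (t x y : ℝ) :
    Real.sqrt (t ^ 2 + x ^ 2) ≤ Real.sqrt (t ^ 2 + y ^ 2) + |x - y| := by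
  have h1 : Real.sqrt (t ^ 2 + y ^ 2) ^ 2 = t ^ 2 + y ^ 2 :=
    Real.sq_sqrt (by positivity)
  have h2 : |y| ≤ Real.sqrt (t ^ 2 + y ^ 2) := by
    rw [← Real.sqrt_sq_eq_abs]
    exact Real.sqrt_le_sqrt (by nlinarith [sq_nonneg t])
  have h3 : |y| * |x - y| ≤ Real.sqrt (t ^ 2 + y ^ 2) * |x - y| :=
    mul_le_mul_of_nonneg_right h2 (abs_nonneg _)
  have h4 : y * (x - y) ≤ |y| * |x - y| := by
    rw [← abs_mul]; exact le_abs_self _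
  have hB : 0 ≤ Real.sqrt (t ^ 2 + y ^ 2) + |x - y| := by positivity
  have hle : t ^ 2 + x ^ 2 ≤ (Real.sqrt (t ^ 2 + y ^ 2) + |x - y|) ^ 2 := by
    nlinarith [sq_abs (x - y)]
  calc Real.sqrt (t ^ 2 + x ^ 2)
      ≤ Real.sqrt ((Real.sqrt (t ^ 2 + y ^ 2) + |x - y|) ^ 2) := Real.sqrt_le_sqrt hle
    _ = Real.sqrt (t ^ 2 + y ^ 2) + |x - y| := Real.sqrt_sq hB

private lemma sqrt_lip (t x y : ℝ) :
    |Real.sqrt (t ^ 2 + x ^ 2) - Real.sqrt (t ^ 2 + y ^ 2)| ≤ |x - y| := by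
  have h1 := sqrt_lip_one_sided t x y
  have h2 := sqrt_lip_one_sided t y x
  have h3 : |y - x| = |x - y| := abs_sub_comm y x
  rw [h3] at h2
  exact abs_le.mpr ⟨by linarith, by linarith⟩

private lemma stmt16_helper (η τ lam c a : ℝ) (ha : a ≠ 0) (hc : 0 < c)
    (hη : η ^ 2 = τ ^ 2 + (lam + 2 * c) ^ 2) :
    ∃ ς : ℝ, (ς = 1 ∨ ς = -1) ∧ ∃ B : ℝ, ∀ p : ℝ, 0 < p →
      |Real.sqrt (p ^ 2 + 1) * (η + ς * Real.sqrt (τ ^ 2 +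
        (lam + 2 * p * c / Real.sqrt (p ^ 2 + a ^ 2)) ^ 2))| ≤ B := by
  refine ⟨if 0 ≤ η then -1 else 1, by split_ifs <;> simp,
    2 * Real.sqrt 2 * c * (1 + a ^ 2), ?_⟩
  intro p hp
  set s := Real.sqrt (p ^ 2 + a ^ 2) with hs_def
  have hs : 0 < s := Real.sqrt_pos.mpr (by positivity)
  have hss : s ^ 2 = p ^ 2 + a ^ 2 := Real.sq_sqrt (by positivity)
  have hsp : p ≤ s := by
    have := Real.sqrt_le_sqrt (show p ^ 2 ≤ p ^ 2 + a ^ 2 by nlinarith [sq_nonneg a])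
    rwa [Real.sqrt_sq hp.le] at this
  set g := lam + 2 * p * c / s with hg_def
  have hgL : |g - (lam + 2 * c)| = 2 * c * (s - p) / s := by
    have h1 : g - (lam + 2 * c) = -(2 * c * (s - p) / s) := by
      rw [hg_def]; field_simp; ring
    rw [h1, abs_neg, abs_of_nonneg (div_nonneg (by nlinarith) hs.le)]
  have hD0 : 0 ≤ |g - (lam + 2 * c)| := abs_nonneg _
  have hD1 : |g - (lam + 2 * c)| ≤ 2 * c := by
    rw [hgL, div_le_iff₀ hs]; nlinarith
  have hD2 : |g - (lam + 2 * c)| * p ^ 2 ≤ 2 * c * a ^ 2 := by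
    rw [hgL, div_mul_eq_mul_div, div_le_iff₀ hs]
    have ha2 : a ^ 2 = s ^ 2 - p ^ 2 := by linarith
    rw [ha2]
    have h1 : p ^ 2 ≤ (s + p) * s := by nlinarith
    have h2 : 0 ≤ c * (s - p) := mul_nonneg hc.le (by linarith)
    nlinarith [mul_le_mul_of_nonneg_left h1 h2]
  -- the key cancellation
  have hL : Real.sqrt (τ ^ 2 + (lam + 2 * c) ^ 2) = |η| := by
    rw [← hη]; exact Real.sqrt_sq_eq_abs η
  have key : |η + (if 0 ≤ η then (-1:ℝ) else 1) * Real.sqrt (τ ^ 2 + g ^ 2)|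
      ≤ |g - (lam + 2 * c)| := by
    have hlip := sqrt_lip τ g (lam + 2 * c)
    rw [hL] at hlip
    split_ifs with h
    · rw [abs_of_nonneg h] at hlip
      calc |η + -1 * Real.sqrt (τ ^ 2 + g ^ 2)|
          = |Real.sqrt (τ ^ 2 + g ^ 2) - η| := by rw [abs_sub_comm]; ring_nf
        _ ≤ _ := hlip
    · push_neg at h
      rw [abs_of_neg h] at hlip
      calc |η + 1 * Real.sqrt (τ ^ 2 + g ^ 2)|
          = |Real.sqrt (τ ^ 2 + g ^ 2) - -η| := by ring_nf
        _ ≤ _ := hlip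
  have habs : |Real.sqrt (p ^ 2 + 1) * (η + (if 0 ≤ η then (-1:ℝ) else 1) *
      Real.sqrt (τ ^ 2 + g ^ 2))|
      = Real.sqrt (p ^ 2 + 1) * |η + (if 0 ≤ η then (-1:ℝ) else 1) *
        Real.sqrt (τ ^ 2 + g ^ 2)| := by
    rw [abs_mul, abs_of_nonneg (Real.sqrt_nonneg _)]
  rw [habs]
  have hsqrt2 : (0:ℝ) ≤ Real.sqrt 2 := Real.sqrt_nonneg 2
  rcases le_or_gt p 1 with hp1 | hp1
  · have hsq : Real.sqrt (p ^ 2 + 1) ≤ Real.sqrt 2 := by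
      apply Real.sqrt_le_sqrt; nlinarith
    calc Real.sqrt (p ^ 2 + 1) * |η + _ * Real.sqrt (τ ^ 2 + g ^ 2)|
        ≤ Real.sqrt 2 * (2 * c) :=
          mul_le_mul hsq (key.trans hD1) (abs_nonneg _) hsqrt2
      _ ≤ 2 * Real.sqrt 2 * c * (1 + a ^ 2) := by nlinarith [mul_nonneg (mul_nonneg hsqrt2 hc.le) (sq_nonneg a)]
  · have hsq : Real.sqrt (p ^ 2 + 1) ≤ Real.sqrt 2 * p := by
      have h1 : p ^ 2 + 1 ≤ 2 * p ^ 2 := by nlinarith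
      calc Real.sqrt (p ^ 2 + 1) ≤ Real.sqrt (2 * p ^ 2) := Real.sqrt_le_sqrt h1
        _ = Real.sqrt 2 * p := by
            rw [Real.sqrt_mul (by norm_num), Real.sqrt_sq hp.le]
    calc Real.sqrt (p ^ 2 + 1) * |η + _ * Real.sqrt (τ ^ 2 + g ^ 2)|
        ≤ (Real.sqrt 2 * p) * |g - (lam + 2 * c)| :=
          mul_le_mul hsq key (abs_nonneg _) (by positivity)
      _ ≤ 2 * Real.sqrt 2 * c * (1 + a ^ 2) := by
          nlinarith [mul_nonneg (mul_nonneg hsqrt2 (by linarith : (0:ℝ) ≤ p - 1)) hD0,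
            mul_le_mul_of_nonneg_left hD2 hsqrt2, mul_nonneg hsqrt2 hc.le]

/-- Let `η, τ, λ, m ∈ ℝ` with `m ≠ 0`, `c > 0`, `d = η² - τ² - λ²`,
`g p = λ + 2 p c / √(p² + (m c)²)`, and assume the critical condition
`(d/4 - c²)² = λ² c²`. Then there is a sign `ς ∈ {+1, -1}` such that the function
`p ↦ √(p² + 1) (η + ς √(τ² + (g p)²))` is bounded on `(0, ∞)` or bounded on `(-∞, 0)`. -/
theorem stmt_16 (η τ lam m c : ℝ) (hm : m ≠ 0) (hc : 0 < c)
    (hcrit : ((η ^ 2 - τ ^ 2 - lam ^ 2) / 4 - c ^ 2) ^ 2 = lam ^ 2 * c ^ 2) :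
    ∃ ς : ℝ, (ς = 1 ∨ ς = -1) ∧
      ((∃ B : ℝ, ∀ p : ℝ, 0 < p →
          |Real.sqrt (p ^ 2 + 1) * (η + ς * Real.sqrt (τ ^ 2 +
            (lam + 2 * p * c / Real.sqrt (p ^ 2 + (m * c) ^ 2)) ^ 2))| ≤ B) ∨
       (∃ B : ℝ, ∀ p : ℝ, p < 0 →
          |Real.sqrt (p ^ 2 + 1) * (η + ς * Real.sqrt (τ ^ 2 +
            (lam + 2 * p * c / Real.sqrt (p ^ 2 + (m * c) ^ 2)) ^ 2))| ≤ B)) := by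
  have ha : m * c ≠ 0 := mul_ne_zero hm hc.ne'
  have hfac : ((η ^ 2 - τ ^ 2 - lam ^ 2) / 4 - c ^ 2 - lam * c) *
      ((η ^ 2 - τ ^ 2 - lam ^ 2) / 4 - c ^ 2 + lam * c) = 0 := by nlinarith [hcrit]
  rcases mul_eq_zero.mp hfac with h | h
  · -- η² = τ² + (lam + 2c)², bounded on (0, ∞)
    have hη : η ^ 2 = τ ^ 2 + (lam + 2 * c) ^ 2 := by nlinarith [h]
    obtain ⟨ς, hς, B, hB⟩ := stmt16_helper η τ lam c (m * c) ha hc hη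
    exact ⟨ς, hς, Or.inl ⟨B, hB⟩⟩
  · -- η² = τ² + ((-lam) + 2c)², bounded on (-∞, 0)
    have hη : η ^ 2 = τ ^ 2 + ((-lam) + 2 * c) ^ 2 := by nlinarith [h]
    obtain ⟨ς, hς, B, hB⟩ := stmt16_helper η τ (-lam) c (m * c) ha hc hη
    refine ⟨ς, hς, Or.inr ⟨B, fun p hp => ?_⟩⟩
    have h1 := hB (-p) (by linarith)
    rw [show ((-p):ℝ) ^ 2 + 1 = p ^ 2 + 1 from by ring,
      show ((-p):ℝ) ^ 2 + (m * c) ^ 2 = p ^ 2 + (m * c) ^ 2 from by ring,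
      show ((-lam) + 2 * (-p) * c / Real.sqrt (p ^ 2 + (m * c) ^ 2)) ^ 2
        = (lam + 2 * p * c / Real.sqrt (p ^ 2 + (m * c) ^ 2)) ^ 2 from by ring] at h1
    exact h1
end
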